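/- Let S be the set of squares of nonnegative integers. Then for every prime p, the sequence u_i = i² (i ≥ 0) is a p-sequence of S: for each k > 0, the polynomial (x−0²)(x−1²)⋯(x−(k−1)²)/((k²−0²)(k²−1²)⋯(k²−(k−1)²)) maps every square integer into ℤ_{(p)}. -/

import Mathlib

/-! With falling factorials `D_m(y) = y (y - 1) ⋯ (y - m + 1)`, one has
`2 ∏_{i<k} (x² - i²) = D_{2k}(x + k) + D_{2k}(x + k - 1)`, because both summands on the right
are `∏_{|i|<k} (x + i)` times `x + k` and `x - k` respectively. At natural `x = n` the right side
is `(2k)! (C(n+k, 2k) + C(n+k-1, 2k))`, and for `x = k > 0` it is `(2k)!`. Hence the quotient is the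
integer `C(n+k, 2k) + C(n+k-1, 2k)`, which lies in `ℤ_{(p)}` for every prime `p`. -/

/-- A rational number lies in the localization `ℤ_{(p)}`: it can be written `x / y`
with `y` not divisible by `p`. -/
def InZLoc (p : ℕ) (q : ℚ) : Prop :=
  ∃ x y : ℤ, ¬ ((p : ℤ) ∣ y) ∧ q = (x : ℚ) / (y : ℚ)

open Finset Polynomial Nat

theorem descPochhammer_eval_mul_sub {R : Type*} [CommRing R] (m : ℕ) (y : R) :
    (descPochhammer R m).eval y * (y - m) = y * (descPochhammer R m).eval (y - 1) := by
  rw [← descPochhammer_succ_eval, descPochhammer_succ_left]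
  simp

theorem two_mul_prod_sq_sub_sq {R : Type*} [CommRing R] (x : R) (k : ℕ) :
    2 * ∏ i ∈ range k, (x ^ 2 - (i : R) ^ 2) =
      (descPochhammer R (2 * k)).eval (x + k) + (descPochhammer R (2 * k)).eval (x + k - 1) := by
  induction k with
  | zero => norm_num
  | succ k ih =>
    have hshift : x + ↑(k + 1) - 1 = x + k := by push_cast; ring
    have hA : (descPochhammer R (2 * (k + 1))).eval (x + ↑(k + 1)) =
        (x + k + 1) * ((descPochhammer R (2 * k)).eval (x + k) * (x - k)) := by
      rw [show 2 * (k + 1) = 2 * k + 1 + 1 by ring, descPochhammer_succ_left]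
      simp only [eval_mul, eval_X, eval_comp, eval_sub, eval_one]
      rw [hshift, descPochhammer_succ_eval]
      push_cast; ring
    have hB : (descPochhammer R (2 * (k + 1))).eval (x + ↑(k + 1) - 1) =
        (descPochhammer R (2 * k)).eval (x + k) * (x - k) * (x - k - 1) := by
      rw [hshift, show 2 * (k + 1) = 2 * k + 1 + 1 by ring, descPochhammer_succ_eval,
        descPochhammer_succ_eval]
      push_cast; ring
    have hAB := descPochhammer_eval_mul_sub (2 * k) (x + k)
    rw [prod_range_succ, ← mul_assoc, ih, hA, hB]
    push_cast at hAB
    linear_combination (k - x) * hAB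

theorem two_mul_prod_sq_sub_sq_natCast (n : ℕ) {k : ℕ} (hk : 0 < k) :
    2 * ∏ i ∈ range k, ((n : ℤ) ^ 2 - (i : ℤ) ^ 2) =
      (2 * k)! * ((n + k).choose (2 * k) + (n + k - 1).choose (2 * k)) := by
  rw [two_mul_prod_sq_sub_sq, ← Nat.cast_add, ← Nat.cast_pred (by omega),
    descPochhammer_eval_eq_descFactorial, descPochhammer_eval_eq_descFactorial,
    Nat.descFactorial_eq_factorial_mul_choose, Nat.descFactorial_eq_factorial_mul_choose]
  push_cast
  ring

theorem two_mul_prod_sq_sub_sq_self {k : ℕ} (hk : 0 < k) :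
    2 * ∏ i ∈ range k, ((k : ℤ) ^ 2 - (i : ℤ) ^ 2) = (2 * k)! := by
  rw [two_mul_prod_sq_sub_sq_natCast k hk, ← two_mul, Nat.choose_self,
    Nat.choose_eq_zero_of_lt (by omega)]
  simp

theorem prod_sq_sub_sq_dvd (n k : ℕ) :
    ∏ i ∈ range k, ((k : ℤ) ^ 2 - (i : ℤ) ^ 2) ∣ ∏ i ∈ range k, ((n : ℤ) ^ 2 - (i : ℤ) ^ 2) := by
  rcases Nat.eq_zero_or_pos k with rfl | hk
  · simp
  refine ⟨(n + k).choose (2 * k) + (n + k - 1).choose (2 * k), ?_⟩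
  apply mul_left_cancel₀ (two_ne_zero : (2 : ℤ) ≠ 0)
  rw [two_mul_prod_sq_sub_sq_natCast n hk, ← mul_assoc, two_mul_prod_sq_sub_sq_self hk]

theorem prod_sq_sub_sq_ne_zero (k : ℕ) : ∏ i ∈ range k, ((k : ℤ) ^ 2 - (i : ℤ) ^ 2) ≠ 0 :=
  prod_ne_zero_iff.mpr fun i hi => sub_ne_zero.mpr <| by
    exact_mod_cast (Nat.pow_lt_pow_left (mem_range.mp hi) two_ne_zero).ne'

theorem inZLoc_intCast {p : ℕ} (hp : p ≠ 1) (c : ℤ) : InZLoc p c :=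
  ⟨c, 1, fun h => hp (by exact_mod_cast Int.eq_one_of_dvd_one (Int.natCast_nonneg p) h), by simp⟩

theorem squares_p_sequence_general (p : ℕ) (hp : p.Prime) (k : ℕ) (n : ℕ) :
    InZLoc p
      ((∏ i ∈ Finset.range k, (((n ^ 2 : ℕ) : ℚ) - ((i ^ 2 : ℕ) : ℚ))) /
       (∏ i ∈ Finset.range k, (((k ^ 2 : ℕ) : ℚ) - ((i ^ 2 : ℕ) : ℚ)))) := by
  obtain ⟨c, hc⟩ := prod_sq_sub_sq_dvd n k
  have hden : ∏ i ∈ range k, ((k : ℚ) ^ 2 - (i : ℚ) ^ 2) ≠ 0 := by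
    exact_mod_cast prod_sq_sub_sq_ne_zero k
  convert inZLoc_intCast hp.ne_one c using 1
  rw [div_eq_iff (by exact_mod_cast hden)]
  exact_mod_cast hc.trans (mul_comm _ _)

/-- Let `S` be the set of squares of nonnegative integers.  For every
prime `p`, the sequence `u_i = i²` is a `p`-sequence of `S`: for each `k > 0` the
polynomial `(x−0²)⋯(x−(k−1)²)/((k²−0²)⋯(k²−(k−1)²))` maps every square integer
into `ℤ_{(p)}`. -/
theorem squares_p_sequence (p : ℕ) (hp : p.Prime) (k : ℕ) (hk : 0 < k) (n : ℕ) :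
    InZLoc p
      ((∏ i ∈ Finset.range k, (((n ^ 2 : ℕ) : ℚ) - ((i ^ 2 : ℕ) : ℚ))) /
       (∏ i ∈ Finset.range k, (((k ^ 2 : ℕ) : ℚ) - ((i ^ 2 : ℕ) : ℚ)))) :=
  squares_p_sequence_general p hp k n
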